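/- Let (x₁, y₁), …, (x_T, y_T) ∈ ℝ², let (X*, Y*) be a random vector whose law is the empirical distribution (1/T) Σ_{t=1}^T δ_{(x_t, y_t)}, let ξ be a random variable independent of (X*, Y*) whose law has Lebesgue density φ : ℝ → [0,∞), and let h > 0. Define N(x) = Σ_{t=1}^T y_t φ((x − x_t)/h) and D(x) = Σ_{t=1}^T φ((x − x_t)/h). Then D(X* + h·ξ) > 0 almost surely and E[Y* | σ(X* + h·ξ)] = N(X* + h·ξ) / D(X* + h·ξ) almost surely; that is, the Nadaraya–Watson formula x ↦ N(x)/D(x) is a version of the conditional expectation of Y* given X* + h·ξ = x. -/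

import Mathlib

open MeasureTheory ProbabilityTheory
open scoped ENNReal
open scoped NNReal

/-- Change of variables for the kernel. -/
lemma nw_cov (φ w : ℝ → ℝ) (c : ℝ) {h : ℝ} (hh : 0 < h) :
    ∫ u, φ u * w (c + h * u) = h⁻¹ * ∫ z, φ ((z - c) / h) * w z := by
  have key : (fun u => φ u * w (c + h * u))
      = fun u => (fun v => (fun z => φ ((z - c) / h) * w z) (c + v)) (h * u) := by
    funext u
    simp only [add_sub_cancel_left, mul_div_cancel_left₀ _ hh.ne']
  rw [key, Measure.integral_comp_mul_left
      (fun v => (fun z => φ ((z - c) / h) * w z) (c + v)) h]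
  rw [integral_add_left_eq_self (fun z => φ ((z - c) / h) * w z) c]
  rw [abs_of_pos (inv_pos.mpr hh), smul_eq_mul]

/-- the Nadaraya–Watson kernel estimator of a conditional expectation.
If `(X*, Y*)` has the empirical distribution of the points `(x_t, y_t)`, `ξ` is
independent of `(X*, Y*)` with Lebesgue density `φ`, and `h > 0`, then with
`N(x) = ∑ t, y_t φ((x − x_t)/h)` and `D(x) = ∑ t, φ((x − x_t)/h)` we have
`D(X* + hξ) > 0` a.s. and `E[Y* | σ(X* + hξ)] = N(X* + hξ)/D(X* + hξ)` a.s. -/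
theorem nadaraya_watson_condexp
    {Ω : Type*} [MeasurableSpace Ω] (μ : Measure Ω) [IsProbabilityMeasure μ]
    (T : ℕ) (hT : 0 < T) (xy : Fin T → ℝ × ℝ)
    (Xstar Ystar ξ : Ω → ℝ)
    (hXY : Measurable fun ω => (Xstar ω, Ystar ω)) (hξ : Measurable ξ)
    (φ : ℝ → ℝ) (hφ : Measurable φ) (hφnonneg : ∀ u, 0 ≤ φ u)
    (hlawXY : Measure.map (fun ω => (Xstar ω, Ystar ω)) μ
      = (T : ℝ≥0∞)⁻¹ • ∑ t : Fin T, Measure.dirac (xy t))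
    (hlawξ : Measure.map ξ μ = volume.withDensity fun u => ENNReal.ofReal (φ u))
    (hindep : IndepFun (fun ω => (Xstar ω, Ystar ω)) ξ μ)
    (h : ℝ) (hh : 0 < h) :
    (∀ᵐ ω ∂μ, 0 < ∑ t : Fin T, φ ((Xstar ω + h * ξ ω - (xy t).1) / h)) ∧
      μ[Ystar | MeasurableSpace.comap (fun ω => Xstar ω + h * ξ ω) inferInstance]
        =ᵐ[μ] fun ω =>
          (∑ t : Fin T, (xy t).2 * φ ((Xstar ω + h * ξ ω - (xy t).1) / h))
            / ∑ t : Fin T, φ ((Xstar ω + h * ξ ω - (xy t).1) / h) := by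
  classical
  have hX : Measurable Xstar := measurable_fst.comp hXY
  have hY : Measurable Ystar := measurable_snd.comp hXY
  set Z : Ω → ℝ := fun ω => Xstar ω + h * ξ ω with hZdef
  have hZ : Measurable Z := hX.add (hξ.const_mul h)
  set D : ℝ → ℝ := fun z => ∑ t : Fin T, φ ((z - (xy t).1) / h) with hDdef
  set Nf : ℝ → ℝ := fun z => ∑ t : Fin T, (xy t).2 * φ ((z - (xy t).1) / h) with hNdef
  set g : ℝ → ℝ := fun z => Nf z / D z with hgdef
  set lφ : Measure ℝ := volume.withDensity fun u => ENNReal.ofReal (φ u) with hlφ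
  haveI hprobξ : IsProbabilityMeasure lφ := hlawξ ▸ Measure.isProbabilityMeasure_map hξ.aemeasurable
  -- measurability of the basic functions
  have hφt : ∀ t : Fin T, Measurable fun z : ℝ => φ ((z - (xy t).1) / h) :=
    fun t => hφ.comp ((measurable_id.sub_const _).div_const _)
  have hDmeas : Measurable D := by
    rw [hDdef]; exact Finset.measurable_sum _ fun t _ => hφt t
  have hNmeas : Measurable Nf := by
    rw [hNdef]; exact Finset.measurable_sum _ fun t _ => (hφt t).const_mul _
  have hgmeas : Measurable g := hNmeas.div hDmeas
  have hDnonneg : ∀ z, 0 ≤ D z := fun z => Finset.sum_nonneg fun t _ => hφnonneg _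
  -- the bound
  set C : ℝ := ∑ t : Fin T, |(xy t).2| with hCdef
  have hC0 : 0 ≤ C := Finset.sum_nonneg fun t _ => abs_nonneg _
  have hNzero : ∀ z, D z = 0 → Nf z = 0 := by
    intro z hz
    have hterm : ∀ t ∈ Finset.univ, φ ((z - (xy t).1) / h) = 0 :=
      (Finset.sum_eq_zero_iff_of_nonneg fun t _ => hφnonneg _).mp hz
    rw [hNdef]
    exact Finset.sum_eq_zero fun t ht => by rw [hterm t ht, mul_zero]
  have hDg : ∀ z, D z * g z = Nf z := by
    intro z
    by_cases hz : D z = 0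
    · rw [hz, zero_mul, (hNzero z hz).symm]
    · rw [hgdef]; field_simp
  have hφleD : ∀ (z : ℝ) (t : Fin T), φ ((z - (xy t).1) / h) ≤ D z := by
    intro z t
    rw [hDdef]
    exact Finset.single_le_sum (f := fun s : Fin T => φ ((z - (xy s).1) / h))
      (fun s _ => hφnonneg _) (Finset.mem_univ t)
  have hgb : ∀ z, |g z| ≤ C := by
    intro z
    by_cases hz : D z = 0
    · rw [hgdef]
      simp only [hz, div_zero, abs_zero]
      exact hC0
    · have hDpos : 0 < D z := lt_of_le_of_ne (hDnonneg z) (Ne.symm hz)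
      rw [hgdef, abs_div, abs_of_pos hDpos, div_le_iff₀ hDpos]
      calc |Nf z| ≤ ∑ t : Fin T, |(xy t).2 * φ ((z - (xy t).1) / h)| := by
              rw [hNdef]; exact Finset.abs_sum_le_sum_abs _ _
        _ ≤ ∑ t : Fin T, |(xy t).2| * D z := by
              refine Finset.sum_le_sum fun t _ => ?_
              rw [abs_mul, abs_of_nonneg (hφnonneg _)]
              exact mul_le_mul_of_nonneg_left (hφleD z t) (abs_nonneg _)
        _ = C * D z := by rw [← Finset.sum_mul]
  -- φ is integrable
  have hφint : Integrable φ volume := by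
    refine ⟨hφ.aestronglyMeasurable, ?_⟩
    rw [hasFiniteIntegral_iff_ofReal (Filter.Eventually.of_forall hφnonneg)]
    have : ∫⁻ u, ENNReal.ofReal (φ u) = lφ Set.univ := by
      rw [hlφ, withDensity_apply _ MeasurableSet.univ, Measure.restrict_univ]
    rw [this, measure_univ]
    exact ENNReal.one_lt_top
  have hφtint : ∀ c : ℝ, Integrable (fun z => φ ((z - c) / h)) volume := by
    intro c
    exact (hφint.comp_div hh.ne').comp_sub_right c
  -- key decomposition of the joint law
  have hdec : Measure.map (fun ω => ((Xstar ω, Ystar ω), ξ ω)) μ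
      = (T : ℝ≥0∞)⁻¹ • ∑ t : Fin T, Measure.map (fun u => (xy t, u)) lφ := by
    have h1 : Measure.map (fun ω => ((Xstar ω, Ystar ω), ξ ω)) μ
        = (Measure.map (fun ω => (Xstar ω, Ystar ω)) μ).prod (Measure.map ξ μ) :=
      (indepFun_iff_map_prod_eq_prod_map_map hXY.aemeasurable hξ.aemeasurable).mp hindep
    rw [h1, hlawXY, hlawξ]
    have hsmul : (((T : ℝ≥0∞)⁻¹ • ∑ t : Fin T, Measure.dirac (xy t)).prod lφ)
        = (T : ℝ≥0∞)⁻¹ • ((∑ t : Fin T, Measure.dirac (xy t)).prod lφ) := by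
      ext s hs
      rw [Measure.prod_apply hs, Measure.smul_apply, Measure.prod_apply hs,
        lintegral_smul_measure]
    rw [hsmul, ← Measure.sum_fintype, Measure.prod_sum_left, Measure.sum_fintype]
    congr 1
    refine Finset.sum_congr rfl fun t _ => ?_
    rw [Measure.dirac_prod]
  -- master integral formula
  have master : ∀ F : (ℝ × ℝ) × ℝ → ℝ, Measurable F →
      (∀ t : Fin T, Integrable (fun u => F (xy t, u)) lφ) →
      ∫ ω, F ((Xstar ω, Ystar ω), ξ ω) ∂μ
        = (T : ℝ)⁻¹ * ∑ t : Fin T, ∫ u, φ u * F (xy t, u) := by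
    intro F hF hFint
    have hpair : Measurable fun ω => ((Xstar ω, Ystar ω), ξ ω) := hXY.prodMk hξ
    rw [← integral_map hpair.aemeasurable hF.aestronglyMeasurable, hdec,
      integral_smul_measure,
      integral_finset_sum_measure (fun t _ =>
        (integrable_map_measure hF.aestronglyMeasurable
          measurable_prodMk_left.aemeasurable).mpr (hFint t))]
    congr 1
    · simp [ENNReal.toReal_inv]
    · refine Finset.sum_congr rfl fun t _ => ?_
      rw [integral_map measurable_prodMk_left.aemeasurable hF.aestronglyMeasurable, hlφ]
      have hrw : (fun u => ENNReal.ofReal (φ u))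
          = fun u => (((φ u).toNNReal : ℝ≥0) : ℝ≥0∞) := rfl
      rw [hrw, integral_withDensity_eq_integral_smul
        (f := fun u => (φ u).toNNReal) (measurable_real_toNNReal.comp hφ)]
      refine integral_congr_ae (Filter.Eventually.of_forall fun u => ?_)
      show (φ u).toNNReal • F (xy t, u) = φ u * F (xy t, u)
      rw [NNReal.smul_def, smul_eq_mul, Real.coe_toNNReal _ (hφnonneg u)]
  -- bounded measurable functions are `lφ`-integrable
  have hbd : ∀ (f : ℝ → ℝ) (K : ℝ), Measurable f → (∀ u, |f u| ≤ K) → Integrable f lφ := by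
    intro f K hf hK
    exact (integrable_const K).mono' hf.aestronglyMeasurable
      (Filter.Eventually.of_forall fun u => by simpa [Real.norm_eq_abs] using hK u)
  have hπ : Measurable fun p : (ℝ × ℝ) × ℝ => p.1.1 + h * p.2 :=
    (measurable_fst.fst).add (measurable_snd.const_mul h)
  -- part 1
  have part1 : ∀ᵐ ω ∂μ, 0 < D (Z ω) := by
    have hA0 : MeasurableSet {z : ℝ | D z ≤ 0} := measurableSet_le hDmeas measurable_const
    rw [ae_iff]
    have hset : {ω | ¬ 0 < D (Z ω)} = Z ⁻¹' {z | D z ≤ 0} := by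
      ext ω; simp [not_lt]
    rw [hset, ← Measure.map_apply hZ hA0]
    have hπ : Measurable fun p : (ℝ × ℝ) × ℝ => p.1.1 + h * p.2 :=
      (measurable_fst.fst).add (measurable_snd.const_mul h)
    have hZcomp : Measure.map Z μ
        = Measure.map (fun p : (ℝ × ℝ) × ℝ => p.1.1 + h * p.2)
            (Measure.map (fun ω => ((Xstar ω, Ystar ω), ξ ω)) μ) := by
      rw [Measure.map_map hπ (hXY.prodMk hξ)]
      rfl
    rw [hZcomp, hdec, Measure.map_smul, Measure.smul_apply]
    have hmapsum : Measure.map (fun p : (ℝ × ℝ) × ℝ => p.1.1 + h * p.2)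
          (∑ t : Fin T, Measure.map (fun u => (xy t, u)) lφ)
        = ∑ t : Fin T, Measure.map (fun u : ℝ => (xy t).1 + h * u) lφ := by
      rw [← Measure.sum_fintype, Measure.map_sum hπ.aemeasurable, Measure.sum_fintype]
      refine Finset.sum_congr rfl fun t _ => ?_
      rw [Measure.map_map hπ measurable_prodMk_left]
      rfl
    rw [hmapsum, Measure.finset_sum_apply]
    have hterm : ∀ t : Fin T,
        Measure.map (fun u : ℝ => (xy t).1 + h * u) lφ {z | D z ≤ 0} = 0 := by
      intro t
      have hmeas : Measurable fun u : ℝ => (xy t).1 + h * u :=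
        measurable_const.add (measurable_id.const_mul h)
      rw [Measure.map_apply hmeas hA0, hlφ, withDensity_apply _ (hmeas hA0)]
      have hzero : ∀ u ∈ (fun u : ℝ => (xy t).1 + h * u) ⁻¹' {z | D z ≤ 0},
          ENNReal.ofReal (φ u) = 0 := by
        intro u hu
        have hD0 : D ((xy t).1 + h * u) = 0 := le_antisymm hu (hDnonneg _)
        rw [hDdef] at hD0
        have hterm0 := (Finset.sum_eq_zero_iff_of_nonneg
          fun s _ => hφnonneg _).mp hD0 t (Finset.mem_univ t)
        rw [add_sub_cancel_left, mul_div_cancel_left₀ _ hh.ne'] at hterm0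
        simp [hterm0]
      rw [setLIntegral_congr_fun (hmeas hA0) hzero,
        lintegral_zero]
    simp [hterm]
  -- Ystar is integrable
  have hYint : Integrable Ystar μ := by
    have hS : MeasurableSet (⋃ t : Fin T, ({xy t} : Set (ℝ × ℝ))) :=
      MeasurableSet.iUnion fun t => measurableSet_singleton _
    have hae : ∀ᵐ ω ∂μ, (Xstar ω, Ystar ω) ∈ ⋃ t : Fin T, ({xy t} : Set (ℝ × ℝ)) := by
      rw [ae_iff]
      have hrw : {ω | ¬ (Xstar ω, Ystar ω) ∈ ⋃ t : Fin T, ({xy t} : Set (ℝ × ℝ))}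
          = (fun ω => (Xstar ω, Ystar ω)) ⁻¹' (⋃ t : Fin T, ({xy t} : Set (ℝ × ℝ)))ᶜ := rfl
      rw [hrw, ← Measure.map_apply hXY hS.compl, hlawXY, Measure.smul_apply,
        Measure.finset_sum_apply]
      have hz : ∀ t : Fin T,
          Measure.dirac (xy t) (⋃ s : Fin T, ({xy s} : Set (ℝ × ℝ)))ᶜ = 0 := by
        intro t
        rw [Measure.dirac_apply]
        have hmem : xy t ∈ ⋃ s : Fin T, ({xy s} : Set (ℝ × ℝ)) :=
          Set.mem_iUnion.mpr ⟨t, rfl⟩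
        simp [Set.indicator_apply, hmem]
      simp [hz]
    refine (integrable_const C).mono' hY.aestronglyMeasurable ?_
    filter_upwards [hae] with ω hω
    obtain ⟨t, ht⟩ := Set.mem_iUnion.mp hω
    have ht' : (Xstar ω, Ystar ω) = xy t := ht
    have hY2 : Ystar ω = (xy t).2 := congrArg Prod.snd ht'
    rw [Real.norm_eq_abs, hY2, hCdef]
    exact Finset.single_le_sum (f := fun s : Fin T => |(xy s).2|)
      (fun s _ => abs_nonneg _) (Finset.mem_univ t)
  -- part 2
  have part2 : μ[Ystar | MeasurableSpace.comap Z inferInstance]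
      =ᵐ[μ] fun ω => g (Z ω) := by
    have hm : MeasurableSpace.comap Z inferInstance ≤ ‹MeasurableSpace Ω› := hZ.comap_le
    haveI : IsFiniteMeasure (μ.trim hm) := isFiniteMeasure_trim hm
    have hZm : Measurable[MeasurableSpace.comap Z inferInstance] Z :=
      Measurable.of_comap_le le_rfl
    have hgZsm : StronglyMeasurable[MeasurableSpace.comap Z inferInstance]
        fun ω => g (Z ω) := (hgmeas.comp hZm).stronglyMeasurable
    have hgZint : Integrable (fun ω => g (Z ω)) μ :=
      (integrable_const C).mono' (hgmeas.comp hZ).aestronglyMeasurable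
        (Filter.Eventually.of_forall fun ω => by
          simpa [Real.norm_eq_abs] using hgb (Z ω))
    refine (ae_eq_condExp_of_forall_setIntegral_eq hm hYint
      (fun s _ _ => hgZint.integrableOn) ?_ hgZsm.aestronglyMeasurable).symm
    intro s hs _
    obtain ⟨A, hA, rfl⟩ := hs
    have hsmeas : MeasurableSet (Z ⁻¹' A) := hZ hA
    have hindA : Measurable (Set.indicator A (fun _ => (1 : ℝ))) :=
      measurable_const.indicator hA
    set ind : ℝ → ℝ := Set.indicator A (fun _ => (1 : ℝ)) with hind
    have hind01 : ∀ z, ind z = 0 ∨ ind z = 1 := by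
      intro z
      by_cases hz : z ∈ A <;> simp [hind, Set.indicator_apply, hz]
    have hindb : ∀ (w : ℝ → ℝ) (K : ℝ), (∀ z, |w z| ≤ K) → ∀ z, |ind z * w z| ≤ K := by
      intro w K hK z
      rcases hind01 z with hz | hz <;> rw [hz]
      · simpa using le_trans (abs_nonneg (w z)) (hK z)
      · simpa using hK z
    have hindrw : ∀ f : Ω → ℝ,
        ∫ ω in Z ⁻¹' A, f ω ∂μ = ∫ ω, ind (Z ω) * f ω ∂μ := by
      intro f
      rw [← integral_indicator hsmeas]
      refine integral_congr_ae (Filter.Eventually.of_forall fun ω => ?_)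
      by_cases hω : Z ω ∈ A <;> simp [hind, Set.indicator_apply, hω]
    rw [hindrw fun ω => g (Z ω), hindrw Ystar]
    -- auxiliary integrability on ℝ
    have hIntAux : ∀ (c : ℝ) (w : ℝ → ℝ) (K : ℝ), Measurable w → (∀ z, |w z| ≤ K) →
        Integrable (fun z => φ ((z - c) / h) * (ind z * w z)) volume := by
      intro c w K hw hK
      have hφc : Measurable fun z : ℝ => φ ((z - c) / h) :=
        hφ.comp ((measurable_id.sub_const _).div_const _)
      refine ((hφtint c).mul_const K).mono'
        (hφc.mul (hindA.mul hw)).aestronglyMeasurable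
        (Filter.Eventually.of_forall fun z => ?_)
      rw [Real.norm_eq_abs, abs_mul, abs_of_nonneg (hφnonneg _)]
      exact mul_le_mul_of_nonneg_left (hindb w K hK z) (hφnonneg _)
    have hyb : ∀ t : Fin T, ∀ z : ℝ, |(fun _ : ℝ => (xy t).2) z| ≤ C := by
      intro t z
      rw [hCdef]
      exact Finset.single_le_sum (f := fun s : Fin T => |(xy s).2|)
        (fun s _ => abs_nonneg _) (Finset.mem_univ t)
    -- pointwise identity under the integral sign
    have hptg : ∀ z : ℝ, ∑ t : Fin T, φ ((z - (xy t).1) / h) * (ind z * g z)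
        = ind z * Nf z := by
      intro z
      have hDz : ∑ t : Fin T, φ ((z - (xy t).1) / h) = D z := by rw [hDdef]
      rw [← Finset.sum_mul, hDz, mul_left_comm, hDg z]
    have hpty : ∀ z : ℝ, ∑ t : Fin T, φ ((z - (xy t).1) / h) * (ind z * (xy t).2)
        = ind z * Nf z := by
      intro z
      have hNz : Nf z = ∑ t : Fin T, (xy t).2 * φ ((z - (xy t).1) / h) := by rw [hNdef]
      rw [hNz, Finset.mul_sum]
      exact Finset.sum_congr rfl fun t _ => by ring
    have hmeasL : ∀ t : Fin T,
        Measurable fun u : ℝ => ind ((xy t).1 + h * u) * g ((xy t).1 + h * u) := by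
      intro t
      have haff : Measurable fun u : ℝ => (xy t).1 + h * u :=
        measurable_const.add (measurable_id.const_mul h)
      exact (hindA.comp haff).mul (hgmeas.comp haff)
    have hmeasR : ∀ t : Fin T,
        Measurable fun u : ℝ => ind ((xy t).1 + h * u) * (xy t).2 := by
      intro t
      have haff : Measurable fun u : ℝ => (xy t).1 + h * u :=
        measurable_const.add (measurable_id.const_mul h)
      exact (hindA.comp haff).mul measurable_const
    -- the common value
    calc ∫ ω, ind (Z ω) * g (Z ω) ∂μ
        = (T : ℝ)⁻¹ * ∑ t : Fin T,
            ∫ u, φ u * (ind ((xy t).1 + h * u) * g ((xy t).1 + h * u)) :=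
          master (fun p => ind (p.1.1 + h * p.2) * g (p.1.1 + h * p.2))
            ((hindA.comp hπ).mul (hgmeas.comp hπ))
            (fun t => hbd _ C (hmeasL t) (fun u => hindb g C hgb _))
      _ = (T : ℝ)⁻¹ * ∑ t : Fin T,
            (h⁻¹ * ∫ z, φ ((z - (xy t).1) / h) * (ind z * g z)) := by
          refine congrArg _ (Finset.sum_congr rfl fun t _ => ?_)
          exact nw_cov φ (fun z => ind z * g z) (xy t).1 hh
      _ = (T : ℝ)⁻¹ * (h⁻¹ * ∫ z, ∑ t : Fin T, φ ((z - (xy t).1) / h) * (ind z * g z)) := by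
          rw [← Finset.mul_sum,
            integral_finset_sum Finset.univ fun t _ => hIntAux (xy t).1 g C hgmeas hgb]
      _ = (T : ℝ)⁻¹ * (h⁻¹ * ∫ z, ind z * Nf z) := by
          rw [integral_congr_ae (Filter.Eventually.of_forall hptg)]
      _ = (T : ℝ)⁻¹ * (h⁻¹ * ∫ z, ∑ t : Fin T, φ ((z - (xy t).1) / h) * (ind z * (xy t).2)) := by
          rw [integral_congr_ae (Filter.Eventually.of_forall hpty)]
      _ = (T : ℝ)⁻¹ * ∑ t : Fin T,
            (h⁻¹ * ∫ z, φ ((z - (xy t).1) / h) * (ind z * (xy t).2)) := by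
          rw [← Finset.mul_sum,
            integral_finset_sum Finset.univ fun t _ =>
              hIntAux (xy t).1 (fun _ => (xy t).2) C measurable_const (hyb t)]
      _ = (T : ℝ)⁻¹ * ∑ t : Fin T,
            ∫ u, φ u * (ind ((xy t).1 + h * u) * (xy t).2) := by
          refine congrArg _ (Finset.sum_congr rfl fun t _ => ?_)
          exact (nw_cov φ (fun z => ind z * (xy t).2) (xy t).1 hh).symm
      _ = ∫ ω, ind (Z ω) * Ystar ω ∂μ :=
          (master (fun p => ind (p.1.1 + h * p.2) * p.1.2)
            ((hindA.comp hπ).mul measurable_fst.snd)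
            (fun t => hbd _ C (hmeasR t)
              (fun u => hindb (fun _ => (xy t).2) C (hyb t) _))).symm
  exact ⟨part1, part2⟩
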